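/- arXiv:1805.02971 — 2 statements merged into one kernel-verified Lean document; each statement's English description precedes it below -/
import Mathlib

section
/- Let $v \geq 0$ and consider an i.i.d. sequence of multinomial choices where in each trial an item $i$ is chosen with probability $v/(1+V)$ (where $V \geq v$ is the total utility of the offered set), item 0 is chosen with probability $1/(1+V)$, and the trials stop at the first occurrence of item 0. Then the number of times item $i$ is chosen before stopping follows a geometric distribution: $\mathbb{P}(\hat{v} = \beta) = \frac{1}{1+v}\left(\frac{v}{1+v}\right)^{\beta}$ for all integers $\beta \geq 0$. -/
/-- The count of choices of item `i` (utility `v`) before the first outside-option choice,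
under repeated MNL trials over a set with total utility `V`, is geometric:
`P(v̂ = β) = (1/(1+v)) (v/(1+v))^β`. The left side sums, over the number `β + m` of
non-outside choices in the epoch, the probability that the epoch has that many non-outside
choices times the binomial probability that exactly `β` of them are item `i`. -/
theorem stmt0 (v V : ℝ) (hv : 0 ≤ v) (hvV : v ≤ V) (hV : 0 < V) (β : ℕ) :
    (∑' m : ℕ, (1 / (1 + V)) * (V / (1 + V)) ^ (β + m) * ((β + m).choose β : ℝ) *
        (v / V) ^ β * ((V - v) / V) ^ m)
      = (1 / (1 + v)) * (v / (1 + v)) ^ β := by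
  have hV1 : (0:ℝ) < 1 + V := by linarith
  have hv1 : (0:ℝ) < 1 + v := by linarith
  have hVne : (V:ℝ) ≠ 0 := ne_of_gt hV
  have hV1ne : (1 + V:ℝ) ≠ 0 := ne_of_gt hV1
  have hv1ne : (1 + v:ℝ) ≠ 0 := ne_of_gt hv1
  set r : ℝ := (V - v) / (1 + V) with hr
  have hrnorm : ‖r‖ < 1 := by
    rw [Real.norm_eq_abs, abs_lt]
    constructor
    · rw [hr, lt_div_iff₀ hV1]; nlinarith
    · rw [hr, div_lt_iff₀ hV1]; nlinarith
  have hterm : ∀ m : ℕ,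
      (1 / (1 + V)) * (V / (1 + V)) ^ (β + m) * ((β + m).choose β : ℝ) *
        (v / V) ^ β * ((V - v) / V) ^ m
      = ((1 / (1 + V)) * (v / (1 + V)) ^ β) * (((m + β).choose β : ℝ) * r ^ m) := by
    intro m
    rw [Nat.add_comm β m, pow_add, hr]
    simp only [div_pow]
    field_simp
  rw [tsum_congr hterm, tsum_mul_left,
    tsum_choose_mul_geometric_of_norm_lt_one β hrnorm]
  have h1r : 1 - r = (1 + v) / (1 + V) := by
    rw [hr]; field_simp; ring
  rw [h1r, div_pow, div_pow, one_div_div]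
  field_simp
  have hk : (1 + v)⁻¹ ^ β * (1 + v) ^ β = 1 := by
    rw [← mul_pow, inv_mul_cancel₀ hv1ne, one_pow]
  linear_combination (-(v * v ^ β * V * (1 + V) ^ β + v * v ^ β * (1 + V) ^ β + v ^ β * V * (1 + V) ^ β + v ^ β * (1 + V) ^ β)) * hk
end

section
/- Let $\hat{v}$ be a geometric random variable on the nonnegative integers with $\mathbb{P}(\hat{v} = \beta) = \frac{1}{1+v}(\frac{v}{1+v})^{\beta}$ where $0 \leq v \leq 1$. Then for any integer $\beta \geq 0$, the conditional expectation of $\hat{v} - v$ given $\hat{v} \leq \beta$ equals $-(1+\beta)\frac{p^{\beta+1}}{1-p^{\beta+1}}$ where $p = \frac{v}{1+v}$. -/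
lemma geoS0 (x : ℝ) (hx : x ≠ 1) (n : ℕ) :
    ∑ k ∈ Finset.range n, x ^ k = (1 - x ^ n) / (1 - x) := by
  rw [geom_sum_eq hx]
  rw [div_eq_div_iff (sub_ne_zero.2 hx) (sub_ne_zero.2 (Ne.symm hx))]
  ring

lemma geoS1 (x : ℝ) (n : ℕ) :
    (1 - x) ^ 2 * ∑ k ∈ Finset.range n, (k : ℝ) * x ^ k
      = x - (n : ℝ) * x ^ n + ((n : ℝ) - 1) * x ^ (n + 1) := by
  induction n with
  | zero => norm_num
  | succ n ih =>
    rw [Finset.sum_range_succ, mul_add, ih]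
    push_cast
    ring

/-- For a geometric random variable `v̂` with `P(v̂ = k) = (1/(1+v)) p^k`, `p = v/(1+v)`,
`0 ≤ v ≤ 1`, the conditional expectation of `v̂ - v` given `v̂ ≤ β` equals
`-(1+β) p^(β+1) / (1 - p^(β+1))`. -/
theorem stmt2 (v : ℝ) (hv0 : 0 ≤ v) (hv1 : v ≤ 1) (β : ℕ) :
    (∑ k ∈ Finset.range (β + 1), ((k : ℝ) - v) * ((1 / (1 + v)) * (v / (1 + v)) ^ k)) /
        (∑ k ∈ Finset.range (β + 1), (1 / (1 + v)) * (v / (1 + v)) ^ k)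
      = -(1 + (β : ℝ)) * (v / (1 + v)) ^ (β + 1) / (1 - (v / (1 + v)) ^ (β + 1)) := by
  have h1 : (0:ℝ) < 1 + v := by linarith
  have h1' : (1:ℝ) + v ≠ 0 := ne_of_gt h1
  set p : ℝ := v / (1 + v) with hp
  have hp0 : 0 ≤ p := div_nonneg hv0 h1.le
  have hp1 : p < 1 := (div_lt_one h1).2 (by linarith)
  have hpne : p ≠ 1 := ne_of_lt hp1
  have hpn : p ^ (β + 1) < 1 := pow_lt_one₀ hp0 hp1 (Nat.succ_ne_zero β)
  have hpn' : 1 - p ^ (β + 1) ≠ 0 := by linarith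
  have hpne' : 1 - p ≠ 0 := by linarith
  -- closed forms
  have hS0 := geoS0 p hpne (β + 1)
  have hS1 := geoS1 p (β + 1)
  have hS1' : ∑ k ∈ Finset.range (β + 1), (k : ℝ) * p ^ k
      = (p - ((β:ℝ)+1) * p ^ (β+1) + ((β:ℝ)) * p ^ (β+2)) / (1 - p) ^ 2 := by
    rw [eq_div_iff (pow_ne_zero 2 hpne'), mul_comm, hS1]
    push_cast
    ring
  -- rewrite numerator
  have hnum : (∑ k ∈ Finset.range (β + 1), ((k : ℝ) - v) * ((1 / (1 + v)) * p ^ k))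
      = (1 / (1 + v)) * (∑ k ∈ Finset.range (β + 1), (k : ℝ) * p ^ k)
        - (v / (1 + v)) * (∑ k ∈ Finset.range (β + 1), p ^ k) := by
    rw [Finset.mul_sum, Finset.mul_sum, ← Finset.sum_sub_distrib]
    refine Finset.sum_congr rfl fun k _ => by ring
  have hden : (∑ k ∈ Finset.range (β + 1), (1 / (1 + v)) * p ^ k)
      = (1 / (1 + v)) * (∑ k ∈ Finset.range (β + 1), p ^ k) := by
    rw [Finset.mul_sum]
  rw [hnum, hden, hS0, hS1']
  have h1v : 1 / (1 + v) = 1 - p := by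
    rw [hp, eq_sub_iff_add_eq, ← add_div, div_eq_one_iff_eq h1']
  have hv_eq : v / (1 + v) = p := rfl
  rw [h1v, hv_eq]
  field_simp
  ring
end
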